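/- Let σ₁, σ₂ ∈ L²_loc([0,∞)) and τ₁, τ₂ ∈ L¹_loc([0,∞)) be real-valued and satisfy the decay conditions ∫_j^{j+1} σ_k(x)² dx → 0 and ∫_j^{j+1} |τ_k(x)| dx → 0 as j → ∞, for k = 1,2. Suppose θ := σ₂ − σ₁ is locally absolutely continuous with θ(y) − θ(x) = ∫_x^y (τ₁(t) − τ₂(t)) dt for all 0 ≤ x ≤ y. Then θ(x) → 0 as x → ∞, and the limit L = lim_{x→∞} ∫_0^x (τ₁(t) − τ₂(t)) dt exists and equals −θ(0). -/

import Mathlib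

open MeasureTheory Filter Set

noncomputable def lpLqNorm (p q : ℝ) (f : ℝ → ℝ) : ENNReal :=
  (∑' n : ℕ, (∫⁻ x in Set.Ico (n : ℝ) (n + 1), ENNReal.ofReal (|f x| ^ q)) ^ (p / q)) ^ (1 / p)

def MemLpLq (p q : ℝ) (f : ℝ → ℝ) : Prop :=
  Measurable f ∧ lpLqNorm p q f < ⊤

def L1loc (f : ℝ → ℝ) : Prop := LocallyIntegrableOn f (Set.Ici 0) volume

def L2loc (f : ℝ → ℝ) : Prop :=
  LocallyIntegrableOn f (Set.Ici 0) volume ∧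
  LocallyIntegrableOn (fun x => f x ^ 2) (Set.Ici 0) volume

def IsEigensolution (σ τ : ℝ → ℝ) (E : ℝ) (U₁ U₂ : ℝ → ℂ) : Prop :=
  ContinuousOn U₁ (Set.Ici 0) ∧ ContinuousOn U₂ (Set.Ici 0) ∧
  ∀ x y : ℝ, 0 ≤ x → x ≤ y →
    (U₁ y = U₁ x + ∫ t in x..y,
      ((-(σ t : ℂ)) * U₁ t + ((τ t - σ t ^ 2 - E : ℝ) : ℂ) * U₂ t)) ∧
    (U₂ y = U₂ x + ∫ t in x..y, (U₁ t + (σ t : ℂ) * U₂ t))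

noncomputable def wkbPhase (g : ℝ → ℝ) (k x : ℝ) : ℂ :=
  Complex.exp (Complex.I * ((k * x - (1 / (2 * k)) * ∫ t in (0:ℝ)..x, g t : ℝ) : ℂ))

def HasWKBwrt (g : ℝ → ℝ) (k : ℝ) (U₁ U₂ : ℝ → ℂ) : Prop :=
  Tendsto (fun x => U₂ x - wkbPhase g k x) atTop (nhds 0) ∧
  Tendsto (fun x => U₁ x - Complex.I * (k : ℂ) * wkbPhase g k x) atTop (nhds 0)

noncomputable def Ffun (σ τ : ℝ → ℝ) (k x : ℝ) : ℂ :=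
  (-Complex.I / (2 * (k : ℂ))) *
    Complex.exp ((-Complex.I) *
      ((2 * k * x - (1 / k) * ∫ t in (0:ℝ)..x, (τ t - σ t ^ 2) : ℝ) : ℂ)) *
    (((τ x - σ x ^ 2 : ℝ) : ℂ) + 2 * Complex.I * (k : ℂ) * (σ x : ℂ))

structure MartingaleStructure where
  S : ℕ → ℕ → Set ℝ
  ordConn : ∀ m j, (S m j).OrdConnected
  sub : ∀ m j, S m j ⊆ Set.Ici (0:ℝ)
  cover : ∀ m, 1 ≤ m → (⋃ j ∈ Finset.Icc 1 (2 ^ m), S m j) = Set.Ici (0:ℝ)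
  disj : ∀ m, 1 ≤ m → ∀ i j, 1 ≤ i → i ≤ 2 ^ m → 1 ≤ j → j ≤ 2 ^ m → i ≠ j →
    Disjoint (S m i) (S m j)
  mono : ∀ m, 1 ≤ m → ∀ i j, 1 ≤ i → i < j → j ≤ 2 ^ m →
    ∀ x ∈ S m i, ∀ y ∈ S m j, x < y
  split : ∀ m j, 1 ≤ m → 1 ≤ j → j ≤ 2 ^ m → S m j = S (m+1) (2*j-1) ∪ S (m+1) (2*j)

noncomputable def Bnorm (M : MartingaleStructure) (s : ℝ) (f : ℝ → ℂ) : ENNReal :=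
  ∑' m : ℕ, ENNReal.ofReal ((m : ℝ) ^ s *
    Real.sqrt (∑ j ∈ Finset.Icc 1 (2 ^ m), ‖(∫ x in M.S m j, f x)‖ ^ 2))

def AdaptedTo (M : MartingaleStructure) (p : ℝ) (f : ℝ → ℝ) : Prop :=
  ∀ m j, 1 ≤ m → 1 ≤ j → j ≤ 2 ^ m →
    lpLqNorm p 1 ((M.S m j).indicator f) ^ p ≤ (2 : ENNReal) ^ (-(m : ℝ)) * lpLqNorm p 1 f ^ p

lemma intOn (f : ℝ → ℝ) (h : LocallyIntegrableOn f (Set.Ici 0) volume) (j : ℕ) :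
    IntegrableOn f (Icc (j:ℝ) (j+1)) volume := by
  apply h.integrableOn_compact_subset ?_ isCompact_Icc
  intro x hx
  exact le_trans (Nat.cast_nonneg j) hx.1

lemma ii_eq_Icc (f : ℝ → ℝ) (j : ℕ) :
    (∫ x in (j:ℝ)..(j+1), f x) = ∫ x in Icc (j:ℝ) (j+1), f x := by
  rw [intervalIntegral.integral_of_le (by linarith), ← integral_Icc_eq_integral_Ioc]

lemma vol_Icc (j : ℕ) : (volume (Icc (j:ℝ) (j+1))).toReal = 1 := by
  rw [Real.volume_Icc]; norm_num

lemma abs_tendsto (σ : ℝ → ℝ) (h1loc : LocallyIntegrableOn σ (Set.Ici 0) volume)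
    (h2 : LocallyIntegrableOn (fun x => σ x ^ 2) (Set.Ici 0) volume)
    (hd : Tendsto (fun j : ℕ => ∫ x in (j:ℝ)..(j+1), σ x ^ 2) atTop (nhds 0)) :
    Tendsto (fun j : ℕ => ∫ x in Icc (j:ℝ) (j+1), |σ x|) atTop (nhds 0) := by
  rw [Metric.tendsto_atTop]
  intro ε hε
  rw [Metric.tendsto_atTop] at hd
  obtain ⟨N, hN⟩ := hd (ε^2/4) (by positivity)
  refine ⟨N, fun j hj => ?_⟩
  have hsq := intOn _ h2 j
  have h1 : IntegrableOn (fun x => |σ x|) (Icc (j:ℝ) (j+1)) volume := (intOn σ h1loc j).abs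
  have hb : IntegrableOn (fun x => ε/4 + σ x ^ 2 / ε) (Icc (j:ℝ) (j+1)) volume :=
    (integrableOn_const measure_Icc_lt_top.ne).add (hsq.div_const ε)
  have hmono : (∫ x in Icc (j:ℝ) (j+1), |σ x|) ≤ ∫ x in Icc (j:ℝ) (j+1), (ε/4 + σ x ^ 2 / ε) := by
    apply setIntegral_mono_on h1 hb measurableSet_Icc
    intro x _
    rw [← mul_le_mul_iff_right₀ hε, mul_add, mul_div_cancel₀ _ (ne_of_gt hε)]
    nlinarith [sq_nonneg (|σ x| - ε/2), sq_abs (σ x)]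
  have heq : (∫ x in Icc (j:ℝ) (j+1), (ε/4 + σ x ^ 2 / ε))
      = ε/4 + (∫ x in Icc (j:ℝ) (j+1), σ x ^ 2) / ε := by
    rw [integral_add (show IntegrableOn (fun _ : ℝ => ε/4) (Icc (j:ℝ) (j+1)) volume from
        integrableOn_const measure_Icc_lt_top.ne)
        (show IntegrableOn (fun x => σ x ^ 2 / ε) (Icc (j:ℝ) (j+1)) volume from hsq.div_const ε),
      setIntegral_const, measureReal_def, vol_Icc, integral_div, one_smul]
  have hlt : (∫ x in Icc (j:ℝ) (j+1), σ x ^ 2) < ε^2/4 := by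
    have := hN j hj
    rw [Real.dist_eq, sub_zero, ii_eq_Icc] at this
    exact lt_of_le_of_lt (le_abs_self _) this
  have hpos : 0 ≤ ∫ x in Icc (j:ℝ) (j+1), |σ x| :=
    setIntegral_nonneg measurableSet_Icc (fun x _ => abs_nonneg _)
  rw [Real.dist_eq, sub_zero, abs_of_nonneg hpos]
  have he : ε^2/4/ε = ε/4 := by field_simp
  calc (∫ x in Icc (j:ℝ) (j+1), |σ x|) ≤ ε/4 + (∫ x in Icc (j:ℝ) (j+1), σ x ^ 2) / ε := by
        rw [← heq]; exact hmono
    _ < ε/4 + (ε^2/4)/ε := by gcongr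
    _ ≤ ε := by rw [he]; linarith

/-- two decaying decompositions differ by an asymptotically constant phase:
θ = σ₂ - σ₁ tends to 0 and ∫₀ˣ (τ₁ - τ₂) converges to -θ(0). -/
theorem gauge_change
    (σ₁ σ₂ τ₁ τ₂ : ℝ → ℝ)
    (hσ₁ : L2loc σ₁) (hσ₂ : L2loc σ₂) (hτ₁ : L1loc τ₁) (hτ₂ : L1loc τ₂)
    (hd1 : Tendsto (fun j : ℕ => ∫ x in (j:ℝ)..(j+1), σ₁ x ^ 2) atTop (nhds 0))
    (hd2 : Tendsto (fun j : ℕ => ∫ x in (j:ℝ)..(j+1), σ₂ x ^ 2) atTop (nhds 0))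
    (hd3 : Tendsto (fun j : ℕ => ∫ x in (j:ℝ)..(j+1), |τ₁ x|) atTop (nhds 0))
    (hd4 : Tendsto (fun j : ℕ => ∫ x in (j:ℝ)..(j+1), |τ₂ x|) atTop (nhds 0))
    (θ : ℝ → ℝ) (hθ : θ = fun x => σ₂ x - σ₁ x)
    (hAC : ∀ x y : ℝ, 0 ≤ x → x ≤ y → θ y - θ x = ∫ t in x..y, (τ₁ t - τ₂ t)) :
    Tendsto θ atTop (nhds 0) ∧
    Tendsto (fun x : ℝ => ∫ t in (0:ℝ)..x, (τ₁ t - τ₂ t)) atTop (nhds (-θ 0)) := by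
  set g : ℝ → ℝ := fun t => τ₁ t - τ₂ t with hg
  set A : ℕ → ℝ := fun j => ∫ t in Icc (j:ℝ) (j+1), |θ t| with hA
  set C : ℕ → ℝ := fun j => ∫ t in Icc (j:ℝ) (j+1), |g t| with hC
  have hθint : ∀ j : ℕ, IntegrableOn θ (Icc (j:ℝ) (j+1)) volume := by
    intro j; rw [hθ]; exact (intOn σ₂ hσ₂.1 j).sub (intOn σ₁ hσ₁.1 j)
  have hgint : ∀ j : ℕ, IntegrableOn g (Icc (j:ℝ) (j+1)) volume :=
    fun j => (intOn τ₁ hτ₁ j).sub (intOn τ₂ hτ₂ j)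
  have hA0 : Tendsto A atTop (nhds 0) := by
    have hub : ∀ j : ℕ, A j ≤ (∫ t in Icc (j:ℝ) (j+1), |σ₁ t|)
        + ∫ t in Icc (j:ℝ) (j+1), |σ₂ t| := by
      intro j
      rw [hA, ← integral_add (intOn σ₁ hσ₁.1 j).abs (intOn σ₂ hσ₂.1 j).abs]
      apply setIntegral_mono_on (hθint j).abs
        ((intOn σ₁ hσ₁.1 j).abs.add (intOn σ₂ hσ₂.1 j).abs) measurableSet_Icc
      intro t _
      rw [hθ]
      calc |σ₂ t - σ₁ t| ≤ |σ₂ t| + |σ₁ t| := abs_sub _ _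
        _ = |σ₁ t| + |σ₂ t| := by ring
    have hnn : ∀ j : ℕ, 0 ≤ A j :=
      fun j => setIntegral_nonneg measurableSet_Icc (fun t _ => abs_nonneg _)
    have := (abs_tendsto σ₁ hσ₁.1 hσ₁.2 hd1).add (abs_tendsto σ₂ hσ₂.1 hσ₂.2 hd2)
    rw [add_zero] at this
    exact squeeze_zero hnn hub this
  have habs3 : ∀ j : ℕ, (∫ x in (j:ℝ)..(j+1), |τ₁ x|) = ∫ x in Icc (j:ℝ) (j+1), |τ₁ x| :=
    fun j => ii_eq_Icc _ j
  have hC0 : Tendsto C atTop (nhds 0) := by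
    have hub : ∀ j : ℕ, C j ≤ (∫ t in Icc (j:ℝ) (j+1), |τ₁ t|)
        + ∫ t in Icc (j:ℝ) (j+1), |τ₂ t| := by
      intro j
      rw [hC, ← integral_add (intOn τ₁ hτ₁ j).abs (intOn τ₂ hτ₂ j).abs]
      apply setIntegral_mono_on (hgint j).abs
        ((intOn τ₁ hτ₁ j).abs.add (intOn τ₂ hτ₂ j).abs) measurableSet_Icc
      intro t _
      exact abs_sub _ _
    have hnn : ∀ j : ℕ, 0 ≤ C j :=
      fun j => setIntegral_nonneg measurableSet_Icc (fun t _ => abs_nonneg _)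
    have h3 : Tendsto (fun j : ℕ => ∫ x in Icc (j:ℝ) (j+1), |τ₁ x|) atTop (nhds 0) := by
      apply hd3.congr; intro j; exact ii_eq_Icc _ j
    have h4 : Tendsto (fun j : ℕ => ∫ x in Icc (j:ℝ) (j+1), |τ₂ x|) atTop (nhds 0) := by
      apply hd4.congr; intro j; exact ii_eq_Icc _ j
    have := h3.add h4
    rw [add_zero] at this
    exact squeeze_zero hnn hub this
  -- key pointwise bound
  have key : ∀ j : ℕ, ∀ x ∈ Icc (j:ℝ) (j+1), |θ x| ≤ A j + C j := by
    intro j x hx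
    have habsint : ∀ a b : ℝ, (j:ℝ) ≤ a → a ≤ b → b ≤ (j:ℝ)+1 →
        |∫ t in a..b, g t| ≤ C j := by
      intro a b ha hab hb
      calc |∫ t in a..b, g t| ≤ ∫ t in a..b, |g t| :=
            intervalIntegral.abs_integral_le_integral_abs hab
        _ = ∫ t in Ioc a b, |g t| := intervalIntegral.integral_of_le hab
        _ ≤ C j := by
            apply setIntegral_mono_set (hgint j).abs
              (Eventually.of_forall (fun t => abs_nonneg _))
            apply HasSubset.Subset.eventuallyLE
            exact (Ioc_subset_Icc_self).trans (Icc_subset_Icc ha hb)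
    have hb : ∀ t ∈ Icc (j:ℝ) (j+1), |θ x| ≤ |θ t| + C j := by
      intro t ht
      have hdiff : |θ x - θ t| ≤ C j := by
        rcases le_total t x with h | h
        · rw [hAC t x (le_trans (Nat.cast_nonneg j) ht.1) h]
          exact habsint t x ht.1 h hx.2
        · rw [abs_sub_comm, hAC x t (le_trans (Nat.cast_nonneg j) hx.1) h]
          exact habsint x t hx.1 h ht.2
      have := abs_sub_abs_le_abs_sub (θ x) (θ t)
      linarith
    have hint : (∫ _t in Icc (j:ℝ) (j+1), |θ x|) ≤
        ∫ t in Icc (j:ℝ) (j+1), (|θ t| + C j) :=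
      setIntegral_mono_on (integrableOn_const measure_Icc_lt_top.ne)
        ((hθint j).abs.add (integrableOn_const measure_Icc_lt_top.ne))
        measurableSet_Icc hb
    have e1 : (∫ _t in Icc (j:ℝ) (j+1), |θ x|) = |θ x| := by
      rw [setIntegral_const, measureReal_def, vol_Icc, one_smul]
    have e2 : (∫ t in Icc (j:ℝ) (j+1), (|θ t| + C j)) = A j + C j := by
      rw [integral_add (hθint j).abs (integrableOn_const measure_Icc_lt_top.ne),
        setIntegral_const, measureReal_def, vol_Icc, one_smul]
    rw [e1, e2] at hint
    exact hint
  have hθ0 : Tendsto θ atTop (nhds 0) := by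
    rw [Metric.tendsto_atTop]
    intro ε hε
    have := (hA0.add hC0)
    rw [add_zero, Metric.tendsto_atTop] at this
    obtain ⟨N, hN⟩ := this ε hε
    refine ⟨(N:ℝ), fun x hx => ?_⟩
    have hx0 : (0:ℝ) ≤ x := le_trans (Nat.cast_nonneg N) hx
    set j := ⌊x⌋₊ with hj
    have hjN : N ≤ j := Nat.le_floor hx
    have hxm : x ∈ Icc (j:ℝ) (j+1) := ⟨Nat.floor_le hx0, (Nat.lt_floor_add_one x).le⟩
    have h1 := key j x hxm
    have h2 := hN j hjN
    rw [Real.dist_eq, sub_zero] at h2 ⊢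
    exact lt_of_le_of_lt h1 (lt_of_le_of_lt (le_abs_self _) h2)
  refine ⟨hθ0, ?_⟩
  have heq : (fun x : ℝ => ∫ t in (0:ℝ)..x, (τ₁ t - τ₂ t)) =ᶠ[atTop]
      (fun x => θ x - θ 0) := by
    filter_upwards [eventually_ge_atTop (0:ℝ)] with x hx
    exact (hAC 0 x le_rfl hx).symm
  have : Tendsto (fun x => θ x - θ 0) atTop (nhds (0 - θ 0)) := hθ0.sub_const _
  rw [zero_sub] at this
  exact Tendsto.congr' heq.symm this
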